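/- arXiv:1605.08836 — 3 statements merged into one kernel-verified Lean document; each statement's English description precedes it below -/
import Mathlib

section
/- Let β > −1 and let u be a bounded smooth function on the punctured cone ball {0 < ρ < 1} (2π-periodic in θ) satisfying △̃u = 0 there. Then there exist real numbers a_k (k ≥ 0) and b_k (k ≥ 1) such that for every 0 < ρ < 1 and every θ, u(ρ,θ) = a₀ + Σ_{k=1}^∞ ( a_k ρ^{k/(β+1)} cos(kθ) + b_k ρ^{k/(β+1)} sin(kθ) ), the series converging pointwise. -/
open Real Filter

/-- The Laplace–Beltrami operator of the cone metric
`g̃ = dρ² + (β+1)²ρ² dθ²`, acting on functions `u(ρ,θ)`: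
`△̃u = ∂²u/∂ρ² + ρ⁻¹ ∂u/∂ρ + (β+1)⁻² ρ⁻² ∂²u/∂θ²`. -/
noncomputable def coneLap (β : ℝ) (u : ℝ → ℝ → ℝ) (ρ θ : ℝ) : ℝ :=
  deriv (fun r => deriv (fun r' => u r' θ) r) ρ
    + ρ⁻¹ * deriv (fun r => u r θ) ρ
    + ((β + 1) ^ 2)⁻¹ * (ρ ^ 2)⁻¹ * deriv (fun s => deriv (fun s' => u ρ s') s) θ


open MeasureTheory Set intervalIntegral

private lemma constOn01 {f : ℝ → ℂ} (hf : ∀ x ∈ Set.Ioo (0:ℝ) 1, HasDerivAt f 0 x)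
    {x y : ℝ} (hx : x ∈ Set.Ioo (0:ℝ) 1) (hy : y ∈ Set.Ioo (0:ℝ) 1) : f x = f y := by
  have key : ∀ x y : ℝ, x ∈ Set.Ioo (0:ℝ) 1 → y ∈ Set.Ioo (0:ℝ) 1 → x ≤ y → f y = f x := by
    intro x y hx hy hxy
    have hsub : Set.Icc x y ⊆ Set.Ioo (0:ℝ) 1 := fun z hz => ⟨lt_of_lt_of_le hx.1 hz.1,
      lt_of_le_of_lt hz.2 hy.2⟩
    have hcont : ContinuousOn f (Set.Icc x y) := fun z hz =>
      ((hf z (hsub hz)).continuousAt).continuousWithinAt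
    have hder : ∀ z ∈ Set.Ico x y, HasDerivWithinAt f 0 (Set.Ici z) z := fun z hz =>
      ((hf z (hsub ⟨hz.1, hz.2.le⟩)).hasDerivWithinAt)
    exact constant_of_has_deriv_right_zero hcont hder y (by simp [hxy])
  rcases le_total x y with h | h
  · exact (key x y hx hy h).symm
  · exact key y x hy hx h


private lemma hasDerivAt_parint {F F' : ℝ → ℝ → ℂ} {s : Set ℝ} (hs : IsOpen s) {x₀ : ℝ}
    (hx : x₀ ∈ s) (a b : ℝ)
    (hF : ContinuousOn (fun p : ℝ × ℝ => F p.1 p.2) (s ×ˢ Set.univ))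
    (hF' : ContinuousOn (fun p : ℝ × ℝ => F' p.1 p.2) (s ×ˢ Set.univ))
    (hd : ∀ x ∈ s, ∀ t : ℝ, HasDerivAt (fun y => F y t) (F' x t) x) :
    HasDerivAt (fun x => ∫ t in a..b, F x t) (∫ t in a..b, F' x₀ t) x₀ := by
  obtain ⟨ε, hε, hball⟩ := Metric.isOpen_iff.1 hs x₀ hx
  have hcb : Metric.closedBall x₀ (ε/2) ⊆ s :=
    (Metric.closedBall_subset_ball (by linarith)).trans hball
  have hKC : IsCompact (Metric.closedBall x₀ (ε/2) ×ˢ Set.uIcc a b) :=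
    (isCompact_closedBall _ _).prod isCompact_uIcc
  obtain ⟨C, hC⟩ := hKC.exists_bound_of_continuousOn
    (hF'.mono (fun p hp => ⟨hcb hp.1, Set.mem_univ _⟩))
  have slice : ∀ g : ℝ → ℝ → ℂ, ContinuousOn (fun p : ℝ × ℝ => g p.1 p.2) (s ×ˢ Set.univ) →
      ∀ x ∈ s, Continuous (fun t => g x t) := by
    intro g hg x hxs
    exact hg.comp_continuous (Continuous.prodMk_right x) (fun t => ⟨hxs, Set.mem_univ _⟩)
  have key := intervalIntegral.hasDerivAt_integral_of_dominated_loc_of_deriv_le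
    (F := F) (F' := F') (x₀ := x₀) (a := a) (b := b) (μ := volume)
    (bound := fun _ => C) (s := Metric.ball x₀ (ε/2)) (Metric.ball_mem_nhds x₀ (half_pos hε))
    (Filter.eventually_of_mem (hs.mem_nhds hx) (fun x hxs =>
      ((slice F hF x hxs).aestronglyMeasurable)))
    ((slice F hF x₀ hx).intervalIntegrable a b)
    ((slice F' hF' x₀ hx).aestronglyMeasurable)
    (ae_of_all _ (fun t ht x hxb => hC (x, t)
      ⟨Metric.ball_subset_closedBall hxb, Set.uIoc_subset_uIcc ht⟩))
    intervalIntegrable_const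
    (ae_of_all _ (fun t ht x hxb => hd x (hcb (Metric.ball_subset_closedBall hxb)) t))
  exact key.2

private lemma half_mem : (1/2 : ℝ) ∈ Set.Ioo (0:ℝ) 1 := by norm_num

private lemma hasDerivAt_coe (x : ℝ) : HasDerivAt (fun y : ℝ => (y:ℂ)) 1 x := by
  simpa using (hasDerivAt_id x).ofReal_comp

private lemma hasDerivAt_rpow_coe {x : ℝ} (hx : 0 < x) (t : ℝ) :
    HasDerivAt (fun y : ℝ => ((y ^ t : ℝ) : ℂ)) ((t * x ^ (t-1) : ℝ) : ℂ) x :=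
  (Real.hasDerivAt_rpow_const (Or.inl hx.ne')).ofReal_comp

private lemma ode_solve {ν K : ℝ} (hν : 0 ≤ ν) {c c1 c2 : ℝ → ℂ}
    (h1 : ∀ ρ ∈ Set.Ioo (0:ℝ) 1, HasDerivAt c (c1 ρ) ρ)
    (h2 : ∀ ρ ∈ Set.Ioo (0:ℝ) 1, HasDerivAt c1 (c2 ρ) ρ)
    (hode : ∀ ρ ∈ Set.Ioo (0:ℝ) 1,
      (ρ:ℂ)^2 * c2 ρ + (ρ:ℂ) * c1 ρ = ((ν^2 : ℝ) : ℂ) * c ρ)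
    (hK : ∀ ρ ∈ Set.Ioo (0:ℝ) 1, ‖c ρ‖ ≤ K) :
    ∃ D : ℂ, ‖D‖ ≤ K ∧ ∀ ρ ∈ Set.Ioo (0:ℝ) 1, c ρ = D * ((ρ ^ ν : ℝ) : ℂ) := by
  have hK0 : 0 ≤ K := le_trans (norm_nonneg _) (hK _ half_mem)
  rcases eq_or_lt_of_le hν with hν0 | hνpos
  · -- ν = 0 case
    have hh : ∀ ρ ∈ Set.Ioo (0:ℝ) 1, HasDerivAt (fun y : ℝ => (y:ℂ) * c1 y) 0 ρ := by
      intro ρ hρ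
      have hρ0 : (ρ:ℂ) ≠ 0 := Complex.ofReal_ne_zero.2 hρ.1.ne'
      have e0 := hode ρ hρ
      rw [← hν0] at e0
      have e1 : (ρ:ℂ) * ((ρ:ℂ) * c2 ρ + c1 ρ) = (ρ:ℂ) * 0 := by
        push_cast at e0 ⊢; linear_combination e0
      have e2 := mul_left_cancel₀ hρ0 e1
      have d := (hasDerivAt_coe ρ).mul (h2 ρ hρ)
      refine d.congr_deriv ?_
      linear_combination e2
    obtain ⟨C, hC⟩ : ∃ C : ℂ, ∀ ρ ∈ Set.Ioo (0:ℝ) 1, (ρ:ℂ) * c1 ρ = C :=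
      ⟨_, fun ρ hρ => constOn01 hh hρ half_mem⟩
    have hg : ∀ ρ ∈ Set.Ioo (0:ℝ) 1,
        HasDerivAt (fun y : ℝ => c y - C * ((Real.log y : ℝ):ℂ)) 0 ρ := by
      intro ρ hρ
      have hρ0 : (ρ:ℂ) ≠ 0 := Complex.ofReal_ne_zero.2 hρ.1.ne'
      have d := (h1 ρ hρ).sub (((Real.hasDerivAt_log hρ.1.ne').ofReal_comp).const_mul C)
      refine d.congr_deriv ?_
      have := hC ρ hρ
      push_cast
      rw [← this, mul_comm (ρ:ℂ), mul_assoc, mul_inv_cancel₀ hρ0, mul_one, sub_self]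
    obtain ⟨D, hD⟩ : ∃ D : ℂ, ∀ ρ ∈ Set.Ioo (0:ℝ) 1,
        c ρ = C * ((Real.log ρ : ℝ):ℂ) + D := by
      refine ⟨c (1/2) - C * ((Real.log (1/2) : ℝ):ℂ), fun ρ hρ => ?_⟩
      linear_combination constOn01 hg hρ half_mem
    have hC0 : C = 0 := by
      by_contra h0
      set a : ℝ := (K + ‖D‖ + 1) / ‖C‖ with hadef
      have hCn : (0:ℝ) < ‖C‖ := norm_pos_iff.2 h0
      set ρ₀ : ℝ := min (1/2) (Real.exp (-a)) with hr0
      have hρ₀ : ρ₀ ∈ Set.Ioo (0:ℝ) 1 :=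
        ⟨lt_min (by norm_num) (Real.exp_pos _), lt_of_le_of_lt (min_le_left _ _) (by norm_num)⟩
      have hlog : Real.log ρ₀ ≤ -a := by
        calc Real.log ρ₀ ≤ Real.log (Real.exp (-a)) :=
          Real.log_le_log hρ₀.1 (min_le_right _ _)
        _ = -a := Real.log_exp _
      have ha : 0 ≤ a := by positivity
      have habs : a ≤ |Real.log ρ₀| := by
        rw [abs_of_nonpos (by linarith)]; linarith
      have h1' : ‖C * ((Real.log ρ₀ : ℝ):ℂ)‖ = ‖C‖ * |Real.log ρ₀| := by
        rw [norm_mul, Complex.norm_real, Real.norm_eq_abs]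
      have h2' : ‖C‖ * a ≤ ‖C‖ * |Real.log ρ₀| :=
        mul_le_mul_of_nonneg_left habs hCn.le
      have h3' : ‖C‖ * a = K + ‖D‖ + 1 := by
        rw [hadef, mul_comm]
        exact div_mul_cancel₀ _ hCn.ne'
      have h4' : ‖C * ((Real.log ρ₀ : ℝ):ℂ)‖ - ‖D‖ ≤ ‖c ρ₀‖ := by
        have h5 := norm_add_le (C * ((Real.log ρ₀ : ℝ):ℂ) + D) (-D)
        simp only [add_neg_cancel_right, norm_neg] at h5
        rw [hD ρ₀ hρ₀]; linarith
      have := hK ρ₀ hρ₀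
      rw [h1'] at h4'
      linarith
    refine ⟨D, ?_, ?_⟩
    · have hb := hK _ half_mem
      have hD2 := hD _ half_mem
      rw [hC0] at hD2
      simp only [zero_mul, zero_add] at hD2
      rw [hD2] at hb; exact hb
    · intro ρ hρ
      have := hD ρ hρ
      rw [hC0] at this
      simp only [zero_mul, zero_add] at this
      rw [this, ← hν0, Real.rpow_zero]
      simp
  · -- ν > 0 case
    have hν2 : ν ≠ 0 := hνpos.ne'
    have hν2C : ((ν:ℝ):ℂ) ≠ 0 := by exact_mod_cast hν2
    have hh : ∀ ρ ∈ Set.Ioo (0:ℝ) 1,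
        HasDerivAt (fun y : ℝ => ((y:ℂ) * c1 y - (ν:ℂ) * c y) * ((y ^ ν : ℝ):ℂ)) 0 ρ := by
      intro ρ hρ
      have hρ0 : (ρ:ℝ) ≠ 0 := hρ.1.ne'
      have d1 : HasDerivAt (fun y : ℝ => (y:ℂ) * c1 y - (ν:ℂ) * c y)
          (1 * c1 ρ + (ρ:ℂ) * c2 ρ - (ν:ℂ) * c1 ρ) ρ :=
        ((hasDerivAt_coe ρ).mul (h2 ρ hρ)).sub ((h1 ρ hρ).const_mul (ν:ℂ))
      have d := d1.mul (hasDerivAt_rpow_coe hρ.1 ν)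
      refine d.congr_deriv ?_
      have hsplit : ((ρ ^ ν : ℝ):ℂ) = ((ρ ^ (ν-1) : ℝ):ℂ) * (ρ:ℂ) := by
        rw [show (ρ:ℝ)^ν = ρ^(ν-1)*ρ by rw [Real.rpow_sub_one hρ0]; field_simp]
        push_cast; ring
      rw [hsplit]
      have e0 := hode ρ hρ
      push_cast at e0 ⊢
      linear_combination ((ρ ^ (ν-1) : ℝ):ℂ) * e0
    obtain ⟨C, hC⟩ : ∃ C : ℂ, ∀ ρ ∈ Set.Ioo (0:ℝ) 1,
        ((ρ:ℂ) * c1 ρ - (ν:ℂ) * c ρ) * ((ρ ^ ν : ℝ):ℂ) = C :=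
      ⟨_, fun ρ hρ => constOn01 hh hρ half_mem⟩
    obtain ⟨C', hC'⟩ : ∃ C' : ℂ, 2*(ν:ℂ) * C' = C :=
      ⟨C / (2*(ν:ℂ)), by field_simp⟩
    have hq : ∀ ρ ∈ Set.Ioo (0:ℝ) 1,
        HasDerivAt (fun y : ℝ => c y * ((y ^ (-ν) : ℝ):ℂ)
          + C' * ((y ^ (-(2*ν)) : ℝ):ℂ)) 0 ρ := by
      intro ρ hρ
      have hρ0 : (ρ:ℝ) ≠ 0 := hρ.1.ne'
      have d := ((h1 ρ hρ).mul (hasDerivAt_rpow_coe hρ.1 (-ν))).add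
        ((hasDerivAt_rpow_coe hρ.1 (-(2*ν))).const_mul C')
      refine d.congr_deriv ?_
      have hw1 : ((ρ ^ (-ν) : ℝ):ℂ) = ((ρ ^ (-ν-1) : ℝ):ℂ) * (ρ:ℂ) := by
        rw [show (ρ:ℝ)^(-ν) = ρ^(-ν-1)*ρ by rw [Real.rpow_sub_one hρ0]; field_simp]
        push_cast; ring
      have hw2 : ((ρ ^ (-(2*ν)-1) : ℝ):ℂ) = ((ρ ^ (-ν-1) : ℝ):ℂ) * ((ρ ^ (-ν) : ℝ):ℂ) := by
        rw [show (-(2*ν)-1 : ℝ) = (-ν-1) + (-ν) by ring, Real.rpow_add hρ.1]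
        push_cast; ring
      have hz : ((ρ ^ ν : ℝ):ℂ) * ((ρ ^ (-ν) : ℝ):ℂ) = 1 := by
        rw [show ((ρ^ν : ℝ):ℂ) * ((ρ^(-ν):ℝ):ℂ) = (((ρ^ν) * (ρ^(-ν)) : ℝ):ℂ) by push_cast; ring,
          ← Real.rpow_add hρ.1]
        simp
      have i5 : (ρ:ℂ) * c1 ρ - (ν:ℂ) * c ρ = C * ((ρ ^ (-ν) : ℝ):ℂ) := by
        linear_combination ((ρ ^ (-ν) : ℝ):ℂ) * hC ρ hρ
          - ((ρ:ℂ) * c1 ρ - (ν:ℂ) * c ρ) * hz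
      push_cast at i5 hw1 hw2 ⊢
      linear_combination (c1 ρ * hw1 - (2*(ν:ℂ)*C') * hw2
        + ((ρ^(-ν-1):ℝ):ℂ) * i5
        - (((ρ^(-ν-1):ℝ):ℂ) * ((ρ^(-ν):ℝ):ℂ)) * hC')
    obtain ⟨D, hqc⟩ : ∃ D : ℂ, ∀ ρ ∈ Set.Ioo (0:ℝ) 1,
        c ρ * ((ρ ^ (-ν) : ℝ):ℂ) + C' * ((ρ ^ (-(2*ν)) : ℝ):ℂ) = D :=
      ⟨_, fun ρ hρ => constOn01 hq hρ half_mem⟩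
    have hform : ∀ ρ ∈ Set.Ioo (0:ℝ) 1,
        c ρ = D * ((ρ ^ ν : ℝ):ℂ) - C' * ((ρ ^ (-ν) : ℝ):ℂ) := by
      intro ρ hρ
      have hz : ((ρ ^ (-ν) : ℝ):ℂ) * ((ρ ^ ν : ℝ):ℂ) = 1 := by
        rw [show ((ρ^(-ν) : ℝ):ℂ) * ((ρ^ν:ℝ):ℂ) = (((ρ^(-ν)) * (ρ^ν) : ℝ):ℂ) by push_cast; ring,
          ← Real.rpow_add hρ.1]
        simp
      have hz2 : ((ρ ^ (-(2*ν)) : ℝ):ℂ) * ((ρ ^ ν : ℝ):ℂ) = ((ρ ^ (-ν) : ℝ):ℂ) := by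
        rw [show ((ρ^(-(2*ν)) : ℝ):ℂ) * ((ρ^ν:ℝ):ℂ) = (((ρ^(-(2*ν))) * (ρ^ν) : ℝ):ℂ)
            by push_cast; ring, ← Real.rpow_add hρ.1]
        congr 1; ring
      linear_combination ((ρ ^ ν : ℝ):ℂ) * hqc ρ hρ - c ρ * hz - C' * hz2
    have hmem0 : Set.Ioo (0:ℝ) 1 ∈ nhdsWithin (0:ℝ) (Set.Ioi 0) :=
      Ioo_mem_nhdsGT_of_mem (by norm_num : (0:ℝ) ∈ Set.Ico (0:ℝ) 1)
    have T2 : Tendsto (fun ρ : ℝ => c ρ * ((ρ ^ ν : ℝ):ℂ)) (nhdsWithin 0 (Set.Ioi 0))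
        (nhds 0) := by
      have hbnd : ∀ᶠ ρ in nhdsWithin (0:ℝ) (Set.Ioi 0),
          ‖c ρ * ((ρ ^ ν : ℝ):ℂ)‖ ≤ K * ρ ^ ν := by
        filter_upwards [hmem0] with ρ hρ
        rw [norm_mul, Complex.norm_real, Real.norm_eq_abs,
          abs_of_nonneg (Real.rpow_nonneg hρ.1.le _)]
        exact mul_le_mul_of_nonneg_right (hK ρ hρ) (Real.rpow_nonneg hρ.1.le _)
      have hg : Tendsto (fun ρ : ℝ => K * ρ ^ ν) (nhdsWithin 0 (Set.Ioi 0)) (nhds 0) := by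
        have hc := (Real.continuousAt_rpow_const 0 ν (Or.inr hν)).tendsto
        rw [Real.zero_rpow hν2] at hc
        simpa using (hc.mono_left nhdsWithin_le_nhds).const_mul K
      exact squeeze_zero_norm' hbnd hg
    have T1 : Tendsto (fun ρ : ℝ => c ρ * ((ρ ^ ν : ℝ):ℂ)) (nhdsWithin 0 (Set.Ioi 0))
        (nhds (D * 0 - C')) := by
      have hev : ∀ᶠ ρ in nhdsWithin (0:ℝ) (Set.Ioi 0),
          D * ((ρ ^ (2*ν) : ℝ):ℂ) - C' = c ρ * ((ρ ^ ν : ℝ):ℂ) := by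
        filter_upwards [hmem0] with ρ hρ
        have h2ν : ((ρ ^ ν : ℝ):ℂ) * ((ρ ^ ν : ℝ):ℂ) = ((ρ ^ (2*ν) : ℝ):ℂ) := by
          rw [show ((ρ^ν : ℝ):ℂ) * ((ρ^ν:ℝ):ℂ) = (((ρ^ν) * (ρ^ν) : ℝ):ℂ) by push_cast; ring,
            ← Real.rpow_add hρ.1]
          congr 1; ring
        have hz : ((ρ ^ (-ν) : ℝ):ℂ) * ((ρ ^ ν : ℝ):ℂ) = 1 := by
          rw [show ((ρ^(-ν) : ℝ):ℂ) * ((ρ^ν:ℝ):ℂ) = (((ρ^(-ν)) * (ρ^ν) : ℝ):ℂ) by push_cast; ring,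
            ← Real.rpow_add hρ.1]
          simp
        rw [hform ρ hρ]
        linear_combination -(D * h2ν) + C' * hz
      have hrlim : Tendsto (fun ρ : ℝ => ((ρ ^ (2*ν) : ℝ):ℂ)) (nhdsWithin 0 (Set.Ioi 0))
          (nhds 0) := by
        have h4 : Tendsto (fun x : ℝ => ((x ^ (2*ν) : ℝ):ℂ)) (nhds 0)
            (nhds ((((0:ℝ) ^ (2*ν) : ℝ)):ℂ)) :=
          (Complex.continuous_ofReal.tendsto _).comp
            (Real.continuousAt_rpow_const 0 (2*ν) (Or.inr (by positivity))).tendsto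
        rw [Real.zero_rpow (by positivity : (2*ν:ℝ) ≠ 0)] at h4
        simpa using h4.mono_left nhdsWithin_le_nhds
      exact Tendsto.congr' hev ((tendsto_const_nhds.mul hrlim).sub tendsto_const_nhds)
    have hCeq : (0:ℂ) = D * 0 - C' := tendsto_nhds_unique T2 T1
    have hC0 : C' = 0 := by linear_combination hCeq
    have hform' : ∀ ρ ∈ Set.Ioo (0:ℝ) 1, c ρ = D * ((ρ ^ ν : ℝ):ℂ) := by
      intro ρ hρ
      have := hform ρ hρ
      rw [hC0] at this
      simpa using this
    refine ⟨D, ?_, hform'⟩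
    have hmem1 : Set.Ioo (0:ℝ) 1 ∈ nhdsWithin (1:ℝ) (Set.Iio 1) :=
      Ioo_mem_nhdsLT_of_mem (by norm_num : (1:ℝ) ∈ Set.Ioc (0:ℝ) 1)
    have hlim : Tendsto (fun ρ : ℝ => ‖D * ((ρ ^ ν : ℝ):ℂ)‖) (nhdsWithin 1 (Set.Iio 1))
        (nhds ‖D‖) := by
      have hc := (Real.continuousAt_rpow_const 1 ν (Or.inl one_ne_zero)).tendsto
      rw [Real.one_rpow] at hc
      have h2 : Tendsto (fun ρ : ℝ => D * ((ρ ^ ν : ℝ):ℂ)) (nhdsWithin 1 (Set.Iio 1))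
          (nhds (D * ((1:ℝ):ℂ))) :=
        tendsto_const_nhds.mul
          ((Complex.continuous_ofReal.continuousAt.tendsto.comp
            (hc.mono_left nhdsWithin_le_nhds)))
      have h3 := (continuous_norm.continuousAt (x := D * ((1:ℝ):ℂ))).tendsto.comp h2
      simpa [Function.comp_def] using h3
    refine le_of_tendsto hlim ?_
    filter_upwards [hmem1] with ρ hρ
    rw [← hform' ρ hρ]
    exact hK ρ hρ

-- ============ infrastructure ============

def Uset : Set (ℝ × ℝ) := (Set.Ioo (0:ℝ) 1) ×ˢ (Set.univ : Set ℝ)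

lemma isOpen_Uset : IsOpen Uset := isOpen_Ioo.prod isOpen_univ

lemma mem_Uset {ρ θ : ℝ} (hρ : ρ ∈ Set.Ioo (0:ℝ) 1) : (ρ, θ) ∈ Uset :=
  ⟨hρ, Set.mem_univ _⟩

noncomputable def Fu (u : ℝ → ℝ → ℝ) : ℝ × ℝ → ℝ := fun p => u p.1 p.2
noncomputable def Pd (f : ℝ × ℝ → ℝ) (v : ℝ × ℝ) : ℝ × ℝ → ℝ := fun p => fderiv ℝ f p v

lemma contDiffOn_pdv {f : ℝ × ℝ → ℝ} (hf : ContDiffOn ℝ (⊤ : ℕ∞) f Uset) (v : ℝ × ℝ) :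
    ContDiffOn ℝ (⊤ : ℕ∞) (Pd f v) Uset :=
  (ContinuousLinearMap.apply ℝ ℝ v).contDiff.comp_contDiffOn
    (hf.fderiv_of_isOpen isOpen_Uset (by simp))

lemma hasDerivAt_slice1 {f : ℝ × ℝ → ℝ} (hf : ContDiffOn ℝ (⊤ : ℕ∞) f Uset) {ρ : ℝ} (θ : ℝ)
    (hρ : ρ ∈ Set.Ioo (0:ℝ) 1) :
    HasDerivAt (fun r => f (r, θ)) (Pd f (1,0) (ρ,θ)) ρ := by
  have hdF : DifferentiableAt ℝ f (ρ,θ) :=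
    (hf.contDiffAt (isOpen_Uset.mem_nhds (mem_Uset hρ))).differentiableAt (by simp)
  exact hdF.hasFDerivAt.comp_hasDerivAt ρ ((hasDerivAt_id ρ).prodMk (hasDerivAt_const ρ θ))

lemma hasDerivAt_slice2 {f : ℝ × ℝ → ℝ} (hf : ContDiffOn ℝ (⊤ : ℕ∞) f Uset) {ρ : ℝ} (θ : ℝ)
    (hρ : ρ ∈ Set.Ioo (0:ℝ) 1) :
    HasDerivAt (fun s => f (ρ, s)) (Pd f (0,1) (ρ,θ)) θ := by
  have hdF : DifferentiableAt ℝ f (ρ,θ) :=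
    (hf.contDiffAt (isOpen_Uset.mem_nhds (mem_Uset hρ))).differentiableAt (by simp)
  exact hdF.hasFDerivAt.comp_hasDerivAt θ ((hasDerivAt_const θ ρ).prodMk (hasDerivAt_id θ))

-- exponential kernel
noncomputable def En (n : ℤ) : ℝ → ℂ := fun θ => Complex.exp (-(Complex.I * n * θ))

lemma En_hasDerivAt (n : ℤ) (θ : ℝ) :
    HasDerivAt (En n) (-(Complex.I * n) * En n θ) θ := by
  have hcoe : HasDerivAt (fun t : ℝ => (t:ℂ)) 1 θ := by
    simpa using (hasDerivAt_id θ).ofReal_comp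
  have h1 : HasDerivAt (fun t : ℝ => -(Complex.I * n * (t:ℂ))) (-(Complex.I * n)) θ := by
    exact (hcoe.const_mul (Complex.I * n)).neg.congr_deriv (by ring)
  have h2 := h1.cexp
  have hv : -(Complex.I * n) * En n θ
      = Complex.exp (-(Complex.I * n * (θ:ℂ))) * -(Complex.I * n) := by
    rw [En]; ring
  rw [hv]
  exact h2

lemma En_continuous (n : ℤ) : Continuous (En n) := by
  have : Continuous (fun t : ℝ => -(Complex.I * n * (t:ℂ))) := by continuity
  exact Complex.continuous_exp.comp this

lemma En_norm (n : ℤ) (θ : ℝ) : ‖En n θ‖ = 1 := by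
  rw [En, Complex.norm_exp]
  have : (-(Complex.I * n * θ)).re = 0 := by simp
  rw [this, Real.exp_zero]

lemma En_zero_val (n : ℤ) : En n 0 = 1 := by simp [En]

lemma En_two_pi (n : ℤ) : En n (2*π) = 1 := by
  rw [En, show -(Complex.I * n * ((2*π:ℝ):ℂ)) = ((-n : ℤ) : ℂ) * (2*π*Complex.I) by
    push_cast; ring]
  exact Complex.exp_int_mul_two_pi_mul_I _


-- Main analytic core: coefficient representation
theorem coeffs_rep (β : ℝ) (hβ : -1 < β) (u : ℝ → ℝ → ℝ) (M : ℝ)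
    (hper : ∀ ρ θ : ℝ, u ρ (θ + 2 * π) = u ρ θ)
    (hsmooth : ContDiffOn ℝ (⊤ : ℕ∞) (Fu u) Uset)
    (hM : ∀ ρ θ : ℝ, 0 < ρ → ρ < 1 → |u ρ θ| ≤ M)
    (hharm : ∀ ρ θ : ℝ, 0 < ρ → ρ < 1 → coneLap β u ρ θ = 0) :
    ∀ n : ℤ, ∃ D : ℂ, ‖D‖ ≤ M * (2*π) ∧ ∀ ρ ∈ Set.Ioo (0:ℝ) 1,
      (∫ θ in (0:ℝ)..(2*π), En n θ * (u ρ θ : ℂ))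
        = D * ((ρ ^ ((n.natAbs : ℝ)/(β+1)) : ℝ) : ℂ) := by
  intro n
  have hα : (0:ℝ) < β + 1 := by linarith
  -- partial derivative functions
  set P1 := Pd (Fu u) (1,0) with hP1def
  set P2 := Pd (Fu u) (0,1) with hP2def
  set P11 := Pd P1 (1,0) with hP11def
  set P22 := Pd P2 (0,1) with hP22def
  have l1 : ContDiffOn ℝ (⊤ : ℕ∞) P1 Uset := contDiffOn_pdv hsmooth _
  have l2 : ContDiffOn ℝ (⊤ : ℕ∞) P2 Uset := contDiffOn_pdv hsmooth _
  have l11 : ContDiffOn ℝ (⊤ : ℕ∞) P11 Uset := contDiffOn_pdv l1 _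
  have l22 : ContDiffOn ℝ (⊤ : ℕ∞) P22 Uset := contDiffOn_pdv l2 _
  have d1 : ∀ (θ : ℝ) {ρ : ℝ}, ρ ∈ Set.Ioo (0:ℝ) 1 →
      HasDerivAt (fun r => u r θ) (P1 (ρ,θ)) ρ := fun θ _ hρ => hasDerivAt_slice1 hsmooth θ hρ
  have d2 : ∀ (θ : ℝ) {ρ : ℝ}, ρ ∈ Set.Ioo (0:ℝ) 1 →
      HasDerivAt (fun s => u ρ s) (P2 (ρ,θ)) θ := fun θ _ hρ => hasDerivAt_slice2 hsmooth θ hρ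
  have d11 : ∀ (θ : ℝ) {ρ : ℝ}, ρ ∈ Set.Ioo (0:ℝ) 1 →
      HasDerivAt (fun r => P1 (r,θ)) (P11 (ρ,θ)) ρ := fun θ _ hρ => hasDerivAt_slice1 l1 θ hρ
  have d22 : ∀ (θ : ℝ) {ρ : ℝ}, ρ ∈ Set.Ioo (0:ℝ) 1 →
      HasDerivAt (fun s => P2 (ρ,s)) (P22 (ρ,θ)) θ := fun θ _ hρ => hasDerivAt_slice2 l2 θ hρ
  -- rewrite harmonicity
  have hharm' : ∀ (θ : ℝ) {ρ : ℝ}, ρ ∈ Set.Ioo (0:ℝ) 1 →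
      P11 (ρ,θ) + ρ⁻¹ * P1 (ρ,θ) + ((β + 1)^2)⁻¹ * (ρ^2)⁻¹ * P22 (ρ,θ) = 0 := by
    intro θ ρ hρ
    have e1 : deriv (fun r => u r θ) ρ = P1 (ρ,θ) := (d1 θ hρ).deriv
    have e2 : deriv (fun r => deriv (fun r' => u r' θ) r) ρ = P11 (ρ,θ) := by
      have hev : (fun r => deriv (fun r' => u r' θ) r) =ᶠ[nhds ρ] (fun r => P1 (r,θ)) := by
        filter_upwards [Ioo_mem_nhds hρ.1 hρ.2] with r hr
        exact (d1 θ hr).deriv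
      rw [hev.deriv_eq]
      exact (d11 θ hρ).deriv
    have e3 : deriv (fun s => deriv (fun s' => u ρ s') s) θ = P22 (ρ,θ) := by
      have hfun : (fun s => deriv (fun s' => u ρ s') s) = (fun s => P2 (ρ,s)) := by
        funext s
        exact (d2 s hρ).deriv
      rw [hfun]
      exact (d22 θ hρ).deriv
    have := hharm ρ θ hρ.1 hρ.2
    rw [coneLap, e1, e2, e3] at this
    linarith
  -- periodicity of u and P2 in θ
  have hperP2 : ∀ (θ : ℝ) {ρ : ℝ}, ρ ∈ Set.Ioo (0:ℝ) 1 → P2 (ρ, θ + 2*π) = P2 (ρ, θ) := by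
    intro θ ρ hρ
    have hd : ∀ s, deriv (fun s' => u ρ s') s = P2 (ρ, s) := fun s => (d2 s hρ).deriv
    have hcomp : (fun s => u ρ (s + 2*π)) = (fun s => u ρ s) := funext (fun s => hper ρ s)
    have := deriv_comp_add_const (f := fun s => u ρ s) (a := 2*π) (x := θ)
    rw [hcomp] at this
    rw [← hd (θ + 2*π), ← this, hd θ]
  -- integration by parts (twice)
  have hslC : ∀ {f : ℝ × ℝ → ℝ}, ContDiffOn ℝ (⊤ : ℕ∞) f Uset → ∀ {ρ : ℝ}, ρ ∈ Set.Ioo (0:ℝ) 1 →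
      Continuous (fun θ => (f (ρ,θ) : ℂ)) := by
    intro f hf ρ hρ
    exact Complex.continuous_ofReal.comp
      ((hf.continuousOn).comp_continuous (Continuous.prodMk_right ρ) (fun θ => mem_Uset hρ))
  have hucont : ∀ {ρ : ℝ}, ρ ∈ Set.Ioo (0:ℝ) 1 → Continuous (fun θ => (u ρ θ : ℂ)) := by
    intro ρ hρ
    exact Complex.continuous_ofReal.comp
      ((hsmooth.continuousOn).comp_continuous (Continuous.prodMk_right ρ) (fun θ => mem_Uset hρ))
  have hibp1 : ∀ {ρ : ℝ}, ρ ∈ Set.Ioo (0:ℝ) 1 → ∀ (v v' : ℝ → ℂ),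
      (∀ x : ℝ, HasDerivAt v (v' x) x) → Continuous v' → v (2*π) = v 0 →
      (∫ θ in (0:ℝ)..(2*π), En n θ * v' θ)
        = (Complex.I * n) * ∫ θ in (0:ℝ)..(2*π), En n θ * v θ := by
    intro ρ hρ v v' hv hv'c hvper
    have hu' : IntervalIntegrable (fun θ => -(Complex.I * n) * En n θ) volume 0 (2*π) :=
      (continuous_const.mul (En_continuous n)).intervalIntegrable _ _
    have hv'i : IntervalIntegrable v' volume 0 (2*π) := hv'c.intervalIntegrable _ _
    have key := intervalIntegral.integral_mul_deriv_eq_deriv_mul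
      (u := En n) (v := v) (u' := fun θ => -(Complex.I * n) * En n θ) (v' := v')
      (fun x _ => En_hasDerivAt n x) (fun x _ => hv x) hu' hv'i
    rw [key, En_two_pi, En_zero_val, hvper]
    have : (∫ θ in (0:ℝ)..(2*π), (-(Complex.I * n) * En n θ) * v θ)
        = -(Complex.I * n) * ∫ θ in (0:ℝ)..(2*π), En n θ * v θ := by
      rw [← intervalIntegral.integral_const_mul]
      apply intervalIntegral.integral_congr
      intro θ _
      ring
    rw [this]
    ring
  have hibp : ∀ {ρ : ℝ}, ρ ∈ Set.Ioo (0:ℝ) 1 →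
      (∫ θ in (0:ℝ)..(2*π), En n θ * (P22 (ρ,θ) : ℂ))
        = -(n:ℂ)^2 * ∫ θ in (0:ℝ)..(2*π), En n θ * (u ρ θ : ℂ) := by
    intro ρ hρ
    have hP2per : (P2 (ρ, 2*π) : ℂ) = (P2 (ρ, 0) : ℂ) := by
      have := hperP2 0 hρ
      rw [zero_add] at this
      exact congrArg (fun x : ℝ => (x:ℂ)) this
    have huper : ((u ρ (2*π) : ℝ) : ℂ) = ((u ρ 0 : ℝ) : ℂ) := by
      have := hper ρ 0
      rw [zero_add] at this
      exact congrArg (fun x : ℝ => (x:ℂ)) this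
    have step1 := hibp1 hρ (fun θ => (P2 (ρ,θ) : ℂ)) (fun θ => (P22 (ρ,θ) : ℂ))
      (fun x => (d22 x hρ).ofReal_comp) (hslC l22 hρ) hP2per
    have step2 := hibp1 hρ (fun θ => (u ρ θ : ℂ)) (fun θ => (P2 (ρ,θ) : ℂ))
      (fun x => (d2 x hρ).ofReal_comp) (hslC l2 hρ) huper
    rw [step1, step2]
    have : Complex.I * n * (Complex.I * n) = -(n:ℂ)^2 := by
      have := Complex.I_sq
      linear_combination ((n:ℂ))^2 * this
    rw [← mul_assoc, this]
  -- derivatives of the coefficient integral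
  have hcont_slice : ∀ {f : ℝ × ℝ → ℝ}, ContDiffOn ℝ (⊤ : ℕ∞) f Uset →
      ContinuousOn (fun p : ℝ × ℝ => En n p.2 * (f p : ℂ)) (Set.Ioo (0:ℝ) 1 ×ˢ Set.univ) := by
    intro f hf
    exact (((En_continuous n).comp continuous_snd).continuousOn).mul
      (Complex.continuous_ofReal.comp_continuousOn hf.continuousOn)
  have hc1 : ∀ ρ ∈ Set.Ioo (0:ℝ) 1,
      HasDerivAt (fun x => ∫ θ in (0:ℝ)..(2*π), En n θ * (u x θ : ℂ))
        (∫ θ in (0:ℝ)..(2*π), En n θ * (P1 (ρ,θ) : ℂ)) ρ := by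
    intro ρ hρ
    exact hasDerivAt_parint isOpen_Ioo hρ 0 (2*π) (hcont_slice hsmooth) (hcont_slice l1)
      (fun x hx t => ((d1 t hx).ofReal_comp).const_mul (En n t))
  have hc2 : ∀ ρ ∈ Set.Ioo (0:ℝ) 1,
      HasDerivAt (fun x => ∫ θ in (0:ℝ)..(2*π), En n θ * (P1 (x,θ) : ℂ))
        (∫ θ in (0:ℝ)..(2*π), En n θ * (P11 (ρ,θ) : ℂ)) ρ := by
    intro ρ hρ
    exact hasDerivAt_parint isOpen_Ioo hρ 0 (2*π) (hcont_slice l1) (hcont_slice l11)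
      (fun x hx t => ((d11 t hx).ofReal_comp).const_mul (En n t))
  -- the ODE
  have hode : ∀ ρ ∈ Set.Ioo (0:ℝ) 1,
      (ρ:ℂ)^2 * (∫ θ in (0:ℝ)..(2*π), En n θ * (P11 (ρ,θ) : ℂ))
        + (ρ:ℂ) * (∫ θ in (0:ℝ)..(2*π), En n θ * (P1 (ρ,θ) : ℂ))
        = ((((n.natAbs : ℝ)/(β+1))^2 : ℝ) : ℂ)
            * ∫ θ in (0:ℝ)..(2*π), En n θ * (u ρ θ : ℂ) := by
    intro ρ hρ
    have hρ0 : (ρ:ℝ) ≠ 0 := hρ.1.ne'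
    have hb0 : (β+1:ℝ) ≠ 0 := hα.ne'
    have hI11 : IntervalIntegrable (fun θ => En n θ * (P11 (ρ,θ) : ℂ)) volume 0 (2*π) :=
      ((En_continuous n).mul (hslC l11 hρ)).intervalIntegrable _ _
    have hI1 : IntervalIntegrable (fun θ => En n θ * (P1 (ρ,θ) : ℂ)) volume 0 (2*π) :=
      ((En_continuous n).mul (hslC l1 hρ)).intervalIntegrable _ _
    have step : (ρ:ℂ)^2 * (∫ θ in (0:ℝ)..(2*π), En n θ * (P11 (ρ,θ) : ℂ))
        + (ρ:ℂ) * (∫ θ in (0:ℝ)..(2*π), En n θ * (P1 (ρ,θ) : ℂ))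
        = ∫ θ in (0:ℝ)..(2*π),
            ((ρ:ℂ)^2 * (En n θ * (P11 (ρ,θ) : ℂ)) + (ρ:ℂ) * (En n θ * (P1 (ρ,θ) : ℂ))) := by
      rw [intervalIntegral.integral_add (hI11.const_mul _) (hI1.const_mul _),
        intervalIntegral.integral_const_mul, intervalIntegral.integral_const_mul]
    rw [step]
    have hcong : (∫ θ in (0:ℝ)..(2*π),
          ((ρ:ℂ)^2 * (En n θ * (P11 (ρ,θ) : ℂ)) + (ρ:ℂ) * (En n θ * (P1 (ρ,θ) : ℂ))))
        = ∫ θ in (0:ℝ)..(2*π),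
            (-(((β+1)^2)⁻¹ : ℝ) : ℂ) * (En n θ * (P22 (ρ,θ) : ℂ)) := by
      apply intervalIntegral.integral_congr
      intro θ _
      have h0 := hharm' θ hρ
      have hr : ρ^2 * P11 (ρ,θ) + ρ * P1 (ρ,θ) = -(((β+1)^2)⁻¹) * P22 (ρ,θ) := by
        have e : ρ^2 * ρ⁻¹ = ρ := by
          rw [sq, mul_assoc, mul_inv_cancel₀ hρ0, mul_one]
        have e2 : ρ^2 * (ρ^2)⁻¹ = 1 := mul_inv_cancel₀ (pow_ne_zero 2 hρ0)
        linear_combination ρ^2 * h0 - P1 (ρ,θ) * e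
          - (((β+1)^2)⁻¹ * P22 (ρ,θ)) * e2
      have hrC : ((ρ:ℂ))^2 * (P11 (ρ,θ) : ℂ) + (ρ:ℂ) * (P1 (ρ,θ) : ℂ)
          = (-(((β+1)^2)⁻¹ : ℝ) : ℂ) * (P22 (ρ,θ) : ℂ) := by
        exact_mod_cast congrArg (fun x : ℝ => (x : ℂ)) hr
      linear_combination En n θ * hrC
    rw [hcong, intervalIntegral.integral_const_mul, hibp hρ]
    have hnat : ((n.natAbs : ℝ))^2 = ((n:ℝ))^2 := by
      rw [Nat.cast_natAbs]
      push_cast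
      exact sq_abs _
    have hfact : ((((n.natAbs : ℝ)/(β+1))^2 : ℝ) : ℂ)
        = (-(((β+1)^2)⁻¹ : ℝ) : ℂ) * (-(n:ℂ)^2) := by
      push_cast [div_pow, hnat]
      field_simp
    rw [hfact]
    ring
  -- boundedness
  have hK : ∀ ρ ∈ Set.Ioo (0:ℝ) 1,
      ‖∫ θ in (0:ℝ)..(2*π), En n θ * (u ρ θ : ℂ)‖ ≤ M * (2*π) := by
    intro ρ hρ
    have := intervalIntegral.norm_integral_le_of_norm_le_const
      (a := 0) (b := 2*π) (C := M) (f := fun θ => En n θ * (u ρ θ : ℂ)) ?_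
    · calc ‖_‖ ≤ M * |2*π - 0| := this
      _ = M * (2*π) := by rw [sub_zero, abs_of_pos (by positivity)]
    · intro θ _
      rw [norm_mul, En_norm, one_mul, Complex.norm_real, Real.norm_eq_abs]
      exact hM ρ θ hρ.1 hρ.2
  exact ode_solve (by positivity) hc1 hc2 hode hK

/-- a bounded smooth harmonic function on the punctured cone ball
`{0 < ρ < 1}` has a Fourier-type expansion
`u = a₀ + Σ_{k≥1} (a_k ρ^{k/(β+1)} cos kθ + b_k ρ^{k/(β+1)} sin kθ)`,
the series converging pointwise. -/
theorem stmt0 (β : ℝ) (hβ : -1 < β) (u : ℝ → ℝ → ℝ)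
    (hper : ∀ ρ θ : ℝ, u ρ (θ + 2 * π) = u ρ θ)
    (hsmooth : ContDiffOn ℝ (⊤ : ℕ∞) (fun p : ℝ × ℝ => u p.1 p.2)
      {p : ℝ × ℝ | 0 < p.1 ∧ p.1 < 1})
    (hbdd : ∃ M : ℝ, ∀ ρ θ : ℝ, 0 < ρ → ρ < 1 → |u ρ θ| ≤ M)
    (hharm : ∀ ρ θ : ℝ, 0 < ρ → ρ < 1 → coneLap β u ρ θ = 0) :
    ∃ a b : ℕ → ℝ, ∀ ρ θ : ℝ, 0 < ρ → ρ < 1 →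
      Tendsto (fun N : ℕ => ∑ k ∈ Finset.range N,
          (a k * ρ ^ ((k : ℝ) / (β + 1)) * Real.cos (k * θ)
            + b k * ρ ^ ((k : ℝ) / (β + 1)) * Real.sin (k * θ)))
        atTop (nhds (u ρ θ)) := by
  have hα : (0:ℝ) < β + 1 := by linarith
  have hπ : (0:ℝ) < 2 * π := by positivity
  haveI : Fact ((0:ℝ) < 2 * π) := ⟨hπ⟩
  obtain ⟨M, hM⟩ := hbdd
  have hMnonneg : 0 ≤ M := le_trans (abs_nonneg _) (hM (1/2) 0 (by norm_num) (by norm_num))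
  have hset : {p : ℝ × ℝ | 0 < p.1 ∧ p.1 < 1} = Uset := by
    ext p; simp [Uset, Set.mem_prod]
  rw [hset] at hsmooth
  have hsm : ContDiffOn ℝ (⊤ : ℕ∞) (Fu u) Uset := hsmooth
  choose D hDle hDeq using coeffs_rep β hβ u M hper hsm hM hharm
  -- conjugation symmetry of the integrals
  have hconjInt : ∀ (k : ℤ) (ρ : ℝ),
      (∫ θ in (0:ℝ)..(2*π), En (-k) θ * (u ρ θ : ℂ))
        = (starRingEnd ℂ) (∫ θ in (0:ℝ)..(2*π), En k θ * (u ρ θ : ℂ)) := by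
    intro k ρ
    have hfun : (fun θ : ℝ => En (-k) θ * (u ρ θ : ℂ))
        = fun θ : ℝ => (starRingEnd ℂ) (En k θ * (u ρ θ : ℂ)) := by
      funext θ
      rw [map_mul, Complex.conj_ofReal]
      congr 1
      rw [En, En, ← Complex.exp_conj]
      congr 1
      simp only [map_neg, map_mul, Complex.conj_I, Complex.conj_ofReal, map_intCast]
      push_cast
      ring
    rw [hfun, intervalIntegral.integral_of_le hπ.le,
      intervalIntegral.integral_of_le hπ.le]
    exact integral_conj
  have hwne : ∀ m : ℤ, (((1/2:ℝ) ^ ((m.natAbs : ℝ)/(β+1)) : ℝ) : ℂ) ≠ 0 := by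
    intro m
    exact_mod_cast (Real.rpow_pos_of_pos (by norm_num) _).ne'
  have hconj : ∀ k : ℤ, D (-k) = (starRingEnd ℂ) (D k) := by
    intro k
    have h1 := hDeq (-k) (1/2) half_mem
    rw [Int.natAbs_neg] at h1
    have h2 := congrArg (starRingEnd ℂ) (hDeq k (1/2) half_mem)
    rw [← hconjInt k (1/2), h1, map_mul, Complex.conj_ofReal] at h2
    exact mul_right_cancel₀ (hwne k) h2
  have hD0im : (D 0).im = 0 := by
    have := hconj 0
    rw [neg_zero] at this
    have h2 := congrArg Complex.im this
    simp only [Complex.conj_im] at h2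
    linarith
  refine ⟨(fun k => if k = 0 then (2*π)⁻¹ * (D 0).re else π⁻¹ * (D (k:ℤ)).re),
    (fun k => -π⁻¹ * (D (k:ℤ)).im), ?_⟩
  intro ρ θ hρ0 hρ1
  have hρ : ρ ∈ Set.Ioo (0:ℝ) 1 := ⟨hρ0, hρ1⟩
  -- the continuous periodic lift of u ρ
  have hcontu : Continuous (fun s : ℝ => (u ρ s : ℂ)) :=
    Complex.continuous_ofReal.comp
      ((hsm.continuousOn).comp_continuous (Continuous.prodMk_right ρ) (fun s => mem_Uset hρ))
  have hPer : Function.Periodic (fun s : ℝ => (u ρ s : ℂ)) (2*π) := by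
    intro s
    exact congrArg (fun x : ℝ => (x:ℂ)) (hper ρ s)
  have hlift_cont : Continuous (hPer.lift) := hcontu.quotient_liftOn' _
  set fc : C(AddCircle (2*π), ℂ) := ⟨hPer.lift, hlift_cont⟩ with hfcdef
  have hfc_coe : ∀ s : ℝ, fc (s : AddCircle (2*π)) = (u ρ s : ℂ) := fun s => rfl
  have hfourier : ∀ (m : ℤ) (x : ℝ),
      (fourier (-m) (x : AddCircle (2*π)) : ℂ) = En m x := by
    intro m x
    rw [fourier_coe_apply, En]
    congr 1
    have hπC : (π:ℂ) ≠ 0 := Complex.ofReal_ne_zero.mpr Real.pi_ne_zero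
    push_cast
    field_simp
  have hcoeff : ∀ m : ℤ, fourierCoeff (⇑fc) m
      = (1/(2*π) : ℝ) • (D m * ((ρ ^ ((m.natAbs:ℝ)/(β+1)) : ℝ) : ℂ)) := by
    intro m
    rw [fourierCoeff_eq_intervalIntegral (⇑fc) m 0]
    have hint : (∫ x in (0:ℝ)..(0 + 2*π),
          (fourier (-m) (x : AddCircle (2*π)) : ℂ) • fc (x : AddCircle (2*π)))
        = ∫ s in (0:ℝ)..(2*π), En m s * (u ρ s : ℂ) := by
      rw [zero_add]
      apply intervalIntegral.integral_congr
      intro x _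
      show (fourier (-m) (x : AddCircle (2*π)) : ℂ) • fc (x : AddCircle (2*π))
        = En m x * ((u ρ x : ℝ) : ℂ)
      rw [smul_eq_mul, hfourier, hfc_coe]
    rw [hint, hDeq m ρ hρ]
  -- summability
  set r : ℝ := ρ ^ ((β+1)⁻¹) with hrdef
  have hr0 : 0 ≤ r := Real.rpow_nonneg hρ.1.le _
  have hr1 : r < 1 := Real.rpow_lt_one hρ.1.le hρ.2 (inv_pos.mpr hα)
  have hpow : ∀ m : ℤ, (ρ ^ ((m.natAbs:ℝ)/(β+1)) : ℝ) = r ^ (m.natAbs) := by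
    intro m
    rw [hrdef, ← Real.rpow_natCast (ρ ^ (β+1)⁻¹) _, ← Real.rpow_mul hρ.1.le]
    congr 1
    ring
  have hnorm : ∀ m : ℤ, ‖fourierCoeff (⇑fc) m‖ ≤ ((2*π)⁻¹ * (M * (2*π))) * r ^ m.natAbs := by
    intro m
    rw [hcoeff m, norm_smul, hpow m, norm_mul]
    have h1 : ‖(1/(2*π) : ℝ)‖ = (2*π)⁻¹ := by
      rw [Real.norm_eq_abs, abs_of_pos (by positivity)]
      ring
    have h2 : ‖((r ^ m.natAbs : ℝ) : ℂ)‖ = r ^ m.natAbs := by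
      rw [Complex.norm_real, Real.norm_eq_abs, abs_of_nonneg (pow_nonneg hr0 _)]
    rw [h1, h2]
    have h3 : ‖D m‖ * r ^ m.natAbs ≤ (M * (2*π)) * r ^ m.natAbs :=
      mul_le_mul_of_nonneg_right (hDle m) (pow_nonneg hr0 _)
    calc (2*π)⁻¹ * (‖D m‖ * r ^ m.natAbs)
        ≤ (2*π)⁻¹ * ((M * (2*π)) * r ^ m.natAbs) :=
          mul_le_mul_of_nonneg_left h3 (by positivity)
      _ = ((2*π)⁻¹ * (M * (2*π))) * r ^ m.natAbs := by ring
  have hsummG : Summable (fun m : ℤ => ((2*π)⁻¹ * (M * (2*π))) * r ^ m.natAbs) := by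
    apply Summable.of_nat_of_neg
    · simpa using (summable_geometric_of_lt_one hr0 hr1).mul_left ((2*π)⁻¹ * (M * (2*π)))
    · simpa using (summable_geometric_of_lt_one hr0 hr1).mul_left ((2*π)⁻¹ * (M * (2*π)))
  have hsum : Summable (fourierCoeff (⇑fc)) := Summable.of_norm_bounded hsummG hnorm
  have hHS : HasSum (fun m => fourierCoeff (⇑fc) m • (fourier m (θ : AddCircle (2*π)) : ℂ))
      ((u ρ θ : ℂ)) := by
    have h := has_pointwise_sum_fourier_series_of_summable hsum ((θ:ℝ) : AddCircle (2*π))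
    rwa [hfc_coe θ] at h
  -- explicit terms
  have hfour2 : ∀ m : ℤ, (fourier m ((θ:ℝ) : AddCircle (2*π)) : ℂ)
      = Complex.exp ((((m:ℝ) * θ : ℝ) : ℂ) * Complex.I) := by
    intro m
    rw [fourier_coe_apply]
    congr 1
    have hπC : (π:ℂ) ≠ 0 := Complex.ofReal_ne_zero.mpr Real.pi_ne_zero
    push_cast
    field_simp
  set T : ℤ → ℂ := fun m => (((2*π)⁻¹ : ℝ) : ℂ) * D m * ((r ^ m.natAbs : ℝ) : ℂ)
      * Complex.exp ((((m:ℝ) * θ : ℝ) : ℂ) * Complex.I) with hTdef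
  have hTeq : (fun m => fourierCoeff (⇑fc) m • (fourier m (θ : AddCircle (2*π)) : ℂ)) = T := by
    funext m
    rw [hcoeff m, hfour2 m, hpow m, hTdef]
    simp only [Complex.real_smul, smul_eq_mul]
    push_cast
    ring
  rw [hTeq] at hHS
  have hs2 := hHS.nat_add_neg
  -- term identities
  have hT0 : T 0 = (((2*π)⁻¹ * (D 0).re : ℝ) : ℂ) := by
    have h1 : T 0 = (((2*π)⁻¹ : ℝ) : ℂ) * D 0 := by
      rw [hTdef]; simp
    rw [h1]
    apply Complex.ext
    · simp
    · simp [hD0im]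
  have hterm : ∀ k : ℕ, T (k:ℤ) + T (-(k:ℤ))
      = (((if k = 0 then (2*π)⁻¹ * (D 0).re else π⁻¹ * (D (k:ℤ)).re)
            * ρ ^ ((k:ℝ)/(β+1)) * Real.cos (k*θ)
          + (-π⁻¹ * (D (k:ℤ)).im) * ρ ^ ((k:ℝ)/(β+1)) * Real.sin (k*θ) : ℝ) : ℂ)
        + (if k = 0 then T 0 else 0) := by
    intro k
    have hw' : ρ ^ ((k:ℝ)/(β+1)) = r ^ k := by
      have h := hpow (k:ℤ)
      simpa using h
    rcases eq_or_ne k 0 with rfl | hk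
    · simp only [if_pos rfl, Nat.cast_zero, neg_zero, zero_div, Real.rpow_zero,
        zero_mul, Real.cos_zero, Real.sin_zero, mul_zero, mul_one, add_zero]
      rw [hT0]
      push_cast
      ring
    · simp only [if_neg hk, add_zero]
      have hTconj : T (-(k:ℤ)) = (starRingEnd ℂ) (T (k:ℤ)) := by
        rw [hTdef]
        simp only [map_mul, Complex.conj_ofReal, Int.natAbs_neg]
        congr 1
        · rw [hconj (k:ℤ)]
        · rw [← Complex.exp_conj]
          congr 1
          simp only [map_mul, Complex.conj_ofReal, Complex.conj_I]
          push_cast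
          ring
      have hsplit : T (k:ℤ) = ((((2*π)⁻¹ * r ^ k : ℝ)) : ℂ)
          * (D (k:ℤ) * Complex.exp ((((k:ℝ) * θ : ℝ) : ℂ) * Complex.I)) := by
        rw [hTdef]
        simp only [Int.natAbs_natCast, Int.cast_natCast]
        push_cast
        ring
      have hre : (D (k:ℤ) * Complex.exp ((((k:ℝ) * θ : ℝ) : ℂ) * Complex.I)).re
          = (D (k:ℤ)).re * Real.cos ((k:ℝ)*θ) - (D (k:ℤ)).im * Real.sin ((k:ℝ)*θ) := by
        rw [Complex.mul_re, Complex.exp_ofReal_mul_I_re, Complex.exp_ofReal_mul_I_im]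
      rw [hTconj, Complex.add_conj, hsplit]
      rw [Complex.re_ofReal_mul, hre, hw', Complex.ofReal_inj]
      field_simp
      ring
  -- sum manipulation and limit
  have hsum_eq : ∀ N : ℕ, 1 ≤ N →
      ((∑ k ∈ Finset.range N,
          ((if k = 0 then (2*π)⁻¹ * (D 0).re else π⁻¹ * (D (k:ℤ)).re)
              * ρ ^ ((k:ℝ)/(β+1)) * Real.cos (k*θ)
            + (-π⁻¹ * (D (k:ℤ)).im) * ρ ^ ((k:ℝ)/(β+1)) * Real.sin (k*θ)) : ℝ) : ℂ)
      = (∑ k ∈ Finset.range N, (T (k:ℤ) + T (-(k:ℤ)))) - T 0 := by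
    intro N hN
    rw [Complex.ofReal_sum]
    have hsplit : ∀ k ∈ Finset.range N,
        ((((if k = 0 then (2*π)⁻¹ * (D 0).re else π⁻¹ * (D (k:ℤ)).re)
            * ρ ^ ((k:ℝ)/(β+1)) * Real.cos (k*θ)
          + (-π⁻¹ * (D (k:ℤ)).im) * ρ ^ ((k:ℝ)/(β+1)) * Real.sin (k*θ) : ℝ)) : ℂ)
        = (T (k:ℤ) + T (-(k:ℤ))) - (if k = 0 then T 0 else 0) := by
      intro k _
      rw [hterm k]
      ring
    rw [Finset.sum_congr rfl hsplit, Finset.sum_sub_distrib]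
    congr 1
    rw [Finset.sum_ite_eq' (Finset.range N) 0 (fun _ => T 0)]
    simp [Finset.mem_range, hN]
    omega
  have htend := hs2.tendsto_sum_nat
  have htend2 : Tendsto (fun N => (∑ k ∈ Finset.range N, (T (k:ℤ) + T (-(k:ℤ)))) - T 0)
      atTop (nhds ((u ρ θ : ℂ))) := by
    have h := htend.sub (tendsto_const_nhds (x := T 0))
    simpa using h
  have htend3 : Tendsto (fun N : ℕ => ((∑ k ∈ Finset.range N,
      ((if k = 0 then (2*π)⁻¹ * (D 0).re else π⁻¹ * (D (k:ℤ)).re)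
          * ρ ^ ((k:ℝ)/(β+1)) * Real.cos (k*θ)
        + (-π⁻¹ * (D (k:ℤ)).im) * ρ ^ ((k:ℝ)/(β+1)) * Real.sin (k*θ)) : ℝ) : ℂ))
      atTop (nhds ((u ρ θ : ℂ))) := by
    apply htend2.congr'
    filter_upwards [eventually_ge_atTop 1] with N hN
    exact (hsum_eq N hN).symm
  have hfinal := (Complex.continuous_re.tendsto _).comp htend3
  simp only [Function.comp_def, Complex.ofReal_re] at hfinal
  exact hfinal
end

section
/- Let β > −1. The ℝ-linear span of T_a is the smallest ℝ-vector space of real-valued functions on (0,∞)×ℝ that contains the ℝ-linear span of T_h and is closed under pointwise multiplication; equivalently, the span of T_a equals the subalgebra of functions generated by T_h. -/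
open Real

/-- A point of the (infinite) cone: a radius `ρ > 0` together with an angle `θ ∈ ℝ`
(functions on the cone are those `2π`-periodic in the angle; here we simply work with
all real angles). -/
abbrev ConePt : Type := {ρ : ℝ // 0 < ρ} × ℝ

/-- The function `ρ^{k/(β+1)} cos(kθ)` on the cone. -/
noncomputable def hCos (β : ℝ) (k : ℕ) : ConePt → ℝ :=
  fun p => (p.1 : ℝ) ^ ((k : ℝ) / (β + 1)) * Real.cos (k * p.2)

/-- The function `ρ^{k/(β+1)} sin(kθ)` on the cone. -/
noncomputable def hSin (β : ℝ) (k : ℕ) : ConePt → ℝ :=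
  fun p => (p.1 : ℝ) ^ ((k : ℝ) / (β + 1)) * Real.sin (k * p.2)

/-- The set `T_h` of functions `ρ^{k/(β+1)} cos(kθ)`, `ρ^{k/(β+1)} sin(kθ)`, `k ∈ ℕ`. -/
def Th (β : ℝ) : Set (ConePt → ℝ) :=
  {f | ∃ k : ℕ, f = hCos β k ∨ f = hSin β k}

/-- The function `ρ^{k/(β+1)} cos(lθ)` on the cone. -/
noncomputable def aCos (β : ℝ) (k l : ℕ) : ConePt → ℝ :=
  fun p => (p.1 : ℝ) ^ ((k : ℝ) / (β + 1)) * Real.cos (l * p.2)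

/-- The function `ρ^{k/(β+1)} sin(lθ)` on the cone. -/
noncomputable def aSin (β : ℝ) (k l : ℕ) : ConePt → ℝ :=
  fun p => (p.1 : ℝ) ^ ((k : ℝ) / (β + 1)) * Real.sin (l * p.2)

/-- The set `T_a`: functions `ρ^{k/(β+1)} cos(lθ)`, `ρ^{k/(β+1)} sin(lθ)` where `k, l`
are nonnegative integers with `(k - l)/2` a nonnegative integer, i.e. `k = l + 2m`. -/
def Ta (β : ℝ) : Set (ConePt → ℝ) :=
  {f | ∃ k l : ℕ, (∃ m : ℕ, k = l + 2 * m) ∧ (f = aCos β k l ∨ f = aSin β k l)}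


section Aux

variable (β : ℝ)

lemma mulCC (k l k' l' : ℕ) (hl : l' ≤ l) :
    aCos β k l * aCos β k' l' =
      (1/2 : ℝ) • aCos β (k+k') (l+l') + (1/2 : ℝ) • aCos β (k+k') (l-l') := by
  funext p
  simp only [aCos, Pi.mul_apply, Pi.add_apply, Pi.smul_apply, smul_eq_mul]
  have h1 : ((k+k' : ℕ) : ℝ)/(β+1) = (k : ℝ)/(β+1) + (k' : ℝ)/(β+1) := by push_cast; ring
  have h2 : ((l+l' : ℕ) : ℝ) * p.2 = l*p.2 + l'*p.2 := by push_cast; ring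
  have h3 : ((l-l' : ℕ) : ℝ) * p.2 = l*p.2 - l'*p.2 := by rw [Nat.cast_sub hl]; ring
  rw [h1, Real.rpow_add p.1.2, h2, h3, Real.cos_add, Real.cos_sub]
  ring

lemma mulSS (k l k' l' : ℕ) (hl : l' ≤ l) :
    aSin β k l * aSin β k' l' =
      (1/2 : ℝ) • aCos β (k+k') (l-l') + (-(1/2) : ℝ) • aCos β (k+k') (l+l') := by
  funext p
  simp only [aSin, aCos, Pi.mul_apply, Pi.add_apply, Pi.smul_apply, smul_eq_mul]
  have h1 : ((k+k' : ℕ) : ℝ)/(β+1) = (k : ℝ)/(β+1) + (k' : ℝ)/(β+1) := by push_cast; ring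
  have h2 : ((l+l' : ℕ) : ℝ) * p.2 = l*p.2 + l'*p.2 := by push_cast; ring
  have h3 : ((l-l' : ℕ) : ℝ) * p.2 = l*p.2 - l'*p.2 := by rw [Nat.cast_sub hl]; ring
  rw [h1, Real.rpow_add p.1.2, h2, h3, Real.cos_add, Real.cos_sub]
  ring

lemma mulCS (k l k' l' : ℕ) (hl : l' ≤ l) :
    aCos β k l * aSin β k' l' =
      (1/2 : ℝ) • aSin β (k+k') (l+l') + (-(1/2) : ℝ) • aSin β (k+k') (l-l') := by
  funext p
  simp only [aSin, aCos, Pi.mul_apply, Pi.add_apply, Pi.smul_apply, smul_eq_mul]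
  have h1 : ((k+k' : ℕ) : ℝ)/(β+1) = (k : ℝ)/(β+1) + (k' : ℝ)/(β+1) := by push_cast; ring
  have h2 : ((l+l' : ℕ) : ℝ) * p.2 = l*p.2 + l'*p.2 := by push_cast; ring
  have h3 : ((l-l' : ℕ) : ℝ) * p.2 = l*p.2 - l'*p.2 := by rw [Nat.cast_sub hl]; ring
  rw [h1, Real.rpow_add p.1.2, h2, h3, Real.sin_add, Real.sin_sub]
  ring

lemma mulSC (k l k' l' : ℕ) (hl : l' ≤ l) :
    aSin β k l * aCos β k' l' =
      (1/2 : ℝ) • aSin β (k+k') (l+l') + (1/2 : ℝ) • aSin β (k+k') (l-l') := by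
  funext p
  simp only [aSin, aCos, Pi.mul_apply, Pi.add_apply, Pi.smul_apply, smul_eq_mul]
  have h1 : ((k+k' : ℕ) : ℝ)/(β+1) = (k : ℝ)/(β+1) + (k' : ℝ)/(β+1) := by push_cast; ring
  have h2 : ((l+l' : ℕ) : ℝ) * p.2 = l*p.2 + l'*p.2 := by push_cast; ring
  have h3 : ((l-l' : ℕ) : ℝ) * p.2 = l*p.2 - l'*p.2 := by rw [Nat.cast_sub hl]; ring
  rw [h1, Real.rpow_add p.1.2, h2, h3, Real.sin_add, Real.sin_sub]
  ring

/-- membership of `aCos` in the span of `Ta`. -/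
lemma aCos_mem_span {k l : ℕ} (m : ℕ) (hm : k = l + 2 * m) :
    aCos β k l ∈ Submodule.span ℝ (Ta β) :=
  Submodule.subset_span ⟨k, l, ⟨m, hm⟩, Or.inl rfl⟩

lemma aSin_mem_span {k l : ℕ} (m : ℕ) (hm : k = l + 2 * m) :
    aSin β k l ∈ Submodule.span ℝ (Ta β) :=
  Submodule.subset_span ⟨k, l, ⟨m, hm⟩, Or.inr rfl⟩

/-- products of generators lie in the span. -/
lemma gen_mul_gen {f g : ConePt → ℝ} (hf : f ∈ Ta β) (hg : g ∈ Ta β) :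
    f * g ∈ Submodule.span ℝ (Ta β) := by
  obtain ⟨k, l, ⟨m, hm⟩, hf⟩ := hf
  obtain ⟨k', l', ⟨m', hm'⟩, hg⟩ := hg
  have hkk : k + k' = (l + l') + 2 * (m + m') := by omega
  rcases le_total l' l with hl | hl
  · have hsub : k + k' = (l - l') + 2 * (l' + m + m') := by omega
    rcases hf with rfl | rfl <;> rcases hg with rfl | rfl
    · rw [mulCC β k l k' l' hl]
      exact Submodule.add_mem _
        (Submodule.smul_mem _ _ (aCos_mem_span β _ hkk))
        (Submodule.smul_mem _ _ (aCos_mem_span β _ hsub))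
    · rw [mulCS β k l k' l' hl]
      exact Submodule.add_mem _
        (Submodule.smul_mem _ _ (aSin_mem_span β _ hkk))
        (Submodule.smul_mem _ _ (aSin_mem_span β _ hsub))
    · rw [mulSC β k l k' l' hl]
      exact Submodule.add_mem _
        (Submodule.smul_mem _ _ (aSin_mem_span β _ hkk))
        (Submodule.smul_mem _ _ (aSin_mem_span β _ hsub))
    · rw [mulSS β k l k' l' hl]
      exact Submodule.add_mem _
        (Submodule.smul_mem _ _ (aCos_mem_span β _ hsub))
        (Submodule.smul_mem _ _ (aCos_mem_span β _ hkk))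
  · have hkk' : k' + k = (l' + l) + 2 * (m' + m) := by omega
    have hsub : k' + k = (l' - l) + 2 * (l + m + m') := by omega
    rcases hf with rfl | rfl <;> rcases hg with rfl | rfl
    · rw [mul_comm, mulCC β k' l' k l hl]
      exact Submodule.add_mem _
        (Submodule.smul_mem _ _ (aCos_mem_span β _ hkk'))
        (Submodule.smul_mem _ _ (aCos_mem_span β _ hsub))
    · rw [mul_comm, mulSC β k' l' k l hl]
      exact Submodule.add_mem _
        (Submodule.smul_mem _ _ (aSin_mem_span β _ hkk'))
        (Submodule.smul_mem _ _ (aSin_mem_span β _ hsub))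
    · rw [mul_comm, mulCS β k' l' k l hl]
      exact Submodule.add_mem _
        (Submodule.smul_mem _ _ (aSin_mem_span β _ hkk'))
        (Submodule.smul_mem _ _ (aSin_mem_span β _ hsub))
    · rw [mul_comm, mulSS β k' l' k l hl]
      exact Submodule.add_mem _
        (Submodule.smul_mem _ _ (aCos_mem_span β _ hsub))
        (Submodule.smul_mem _ _ (aCos_mem_span β _ hkk'))

/-- the span of `Ta` is closed under multiplication. -/
lemma span_mul_span {f g : ConePt → ℝ} (hf : f ∈ Submodule.span ℝ (Ta β))
    (hg : g ∈ Submodule.span ℝ (Ta β)) : f * g ∈ Submodule.span ℝ (Ta β) := by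
  have step1 : ∀ f ∈ Ta β, ∀ g ∈ Submodule.span ℝ (Ta β),
      f * g ∈ Submodule.span ℝ (Ta β) := by
    intro f hf g hg
    induction hg using Submodule.span_induction with
    | mem x hx => exact gen_mul_gen β hf hx
    | zero => rw [mul_zero]; exact Submodule.zero_mem _
    | add x y hx hy ihx ihy => rw [mul_add]; exact Submodule.add_mem _ ihx ihy
    | smul c x hx ihx => rw [mul_smul_comm]; exact Submodule.smul_mem _ _ ihx
  induction hf using Submodule.span_induction with
  | mem x hx => exact step1 x hx g hg
  | zero => rw [zero_mul]; exact Submodule.zero_mem _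
  | add x y hx hy ihx ihy => rw [add_mul]; exact Submodule.add_mem _ ihx ihy
  | smul c x hx ihx => rw [smul_mul_assoc]; exact Submodule.smul_mem _ _ ihx

lemma Th_subset_Ta : Th β ⊆ Ta β := by
  rintro f ⟨k, hf | hf⟩
  · exact ⟨k, k, ⟨0, by ring⟩, Or.inl hf⟩
  · exact ⟨k, k, ⟨0, by ring⟩, Or.inr hf⟩

lemma aCos_factor (l m : ℕ) :
    aCos β (l + 2*m) l =
      hCos β m * (hCos β m * hCos β l) + hSin β m * (hSin β m * hCos β l) := by
  funext p
  simp only [aCos, hCos, hSin, Pi.mul_apply, Pi.add_apply]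
  have e : ((l + 2*m : ℕ) : ℝ)/(β+1) = (m : ℝ)/(β+1) + ((m : ℝ)/(β+1) + (l : ℝ)/(β+1)) := by
    push_cast; ring
  rw [e, Real.rpow_add p.1.2, Real.rpow_add p.1.2]
  have h := Real.sin_sq_add_cos_sq ((m : ℝ) * p.2)
  linear_combination (-1 * (p.1 : ℝ) ^ ((m : ℝ)/(β+1)) * (p.1 : ℝ) ^ ((m : ℝ)/(β+1)) *
    (p.1 : ℝ) ^ ((l : ℝ)/(β+1)) * Real.cos ((l : ℝ) * p.2)) * h

lemma aSin_factor (l m : ℕ) :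
    aSin β (l + 2*m) l =
      hCos β m * (hCos β m * hSin β l) + hSin β m * (hSin β m * hSin β l) := by
  funext p
  simp only [aSin, hCos, hSin, Pi.mul_apply, Pi.add_apply]
  have e : ((l + 2*m : ℕ) : ℝ)/(β+1) = (m : ℝ)/(β+1) + ((m : ℝ)/(β+1) + (l : ℝ)/(β+1)) := by
    push_cast; ring
  rw [e, Real.rpow_add p.1.2, Real.rpow_add p.1.2]
  have h := Real.sin_sq_add_cos_sq ((m : ℝ) * p.2)
  linear_combination (-1 * (p.1 : ℝ) ^ ((m : ℝ)/(β+1)) * (p.1 : ℝ) ^ ((m : ℝ)/(β+1)) *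
    (p.1 : ℝ) ^ ((l : ℝ)/(β+1)) * Real.sin ((l : ℝ) * p.2)) * h

lemma span_Ta_minimal (W : Submodule ℝ (ConePt → ℝ))
    (hTh : Submodule.span ℝ (Th β) ≤ W)
    (hmul : ∀ f g : ConePt → ℝ, f ∈ W → g ∈ W → f * g ∈ W) :
    Submodule.span ℝ (Ta β) ≤ W := by
  rw [Submodule.span_le]
  rintro f ⟨k, l, ⟨m, rfl⟩, hf | hf⟩
  all_goals
    have hC : ∀ j : ℕ, hCos β j ∈ W := fun j =>
      hTh (Submodule.subset_span ⟨j, Or.inl rfl⟩)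
    have hS : ∀ j : ℕ, hSin β j ∈ W := fun j =>
      hTh (Submodule.subset_span ⟨j, Or.inr rfl⟩)
  · rw [hf, aCos_factor]
    exact Submodule.add_mem _
      (hmul _ _ (hC m) (hmul _ _ (hC m) (hC l)))
      (hmul _ _ (hS m) (hmul _ _ (hS m) (hC l)))
  · rw [hf, aSin_factor]
    exact Submodule.add_mem _
      (hmul _ _ (hC m) (hmul _ _ (hC m) (hS l)))
      (hmul _ _ (hS m) (hmul _ _ (hS m) (hS l)))

lemma one_mem_span_Ta : (1 : ConePt → ℝ) ∈ Submodule.span ℝ (Ta β) := by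
  have h1 : (1 : ConePt → ℝ) = aCos β 0 0 := by
    funext p; simp [aCos]
  rw [h1]
  exact aCos_mem_span β 0 rfl

end Aux

/-- the ℝ-linear span of `T_a` is the smallest vector space of functions on
the cone containing the span of `T_h` and closed under pointwise multiplication;
equivalently, it is the subalgebra generated by `T_h`. -/
theorem stmt1 (β : ℝ) (hβ : -1 < β) :
    (Submodule.span ℝ (Th β) ≤ Submodule.span ℝ (Ta β)) ∧
    (∀ f g : ConePt → ℝ, f ∈ Submodule.span ℝ (Ta β) → g ∈ Submodule.span ℝ (Ta β) →
      f * g ∈ Submodule.span ℝ (Ta β)) ∧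
    (∀ W : Submodule ℝ (ConePt → ℝ),
      Submodule.span ℝ (Th β) ≤ W →
      (∀ f g : ConePt → ℝ, f ∈ W → g ∈ W → f * g ∈ W) →
      Submodule.span ℝ (Ta β) ≤ W) ∧
    Submodule.span ℝ (Ta β) = Subalgebra.toSubmodule (Algebra.adjoin ℝ (Th β)) := by
  have part1 : Submodule.span ℝ (Th β) ≤ Submodule.span ℝ (Ta β) :=
    Submodule.span_mono (Th_subset_Ta β)
  have part2 : ∀ f g : ConePt → ℝ, f ∈ Submodule.span ℝ (Ta β) →
      g ∈ Submodule.span ℝ (Ta β) → f * g ∈ Submodule.span ℝ (Ta β) :=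
    fun _ _ hf hg => span_mul_span β hf hg
  have part3 := span_Ta_minimal β
  refine ⟨part1, part2, part3, ?_⟩
  apply le_antisymm
  · refine part3 _ ?_ ?_
    · rw [Submodule.span_le]
      exact fun f hf => Algebra.subset_adjoin hf
    · intro f g hf hg
      exact Subalgebra.mul_mem _ hf hg
  · have hS : Algebra.adjoin ℝ (Th β) ≤
        (Submodule.span ℝ (Ta β)).toSubalgebra (one_mem_span_Ta β)
          (fun _ _ hf hg => span_mul_span β hf hg) := by
      apply Algebra.adjoin_le
      exact fun f hf => Submodule.subset_span (Th_subset_Ta β hf)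
    intro x hx
    exact hS hx
end

section
/- Let t₀ < T be real numbers, q > 1, and C > 0. Suppose F : [t₀,T] → ℝ is a bounded, nonnegative, measurable function satisfying F(t) ≤ C ∫_{t₀}^{t} ∫_{t₀}^{s} (r − t₀)^{−1/q} F(r) dr ds for every t ∈ [t₀,T]. Then F(t) = 0 for all t ∈ [t₀,T]. -/
open MeasureTheory Set

section Aux

variable (t₀ T q C : ℝ) (F : ℝ → ℝ)

/-- One iteration step: from a power bound `F r ≤ K (r-t₀)^β` derive an improved power bound. -/
lemma stmt14_step (ht : t₀ < T) (hq : 1 < q) (hC : 0 < C)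
    (hmeas : AEMeasurable F (volume.restrict (Set.Icc t₀ T)))
    (hnonneg : ∀ t ∈ Set.Icc t₀ T, 0 ≤ F t)
    (hiter : ∀ t ∈ Set.Icc t₀ T,
      F t ≤ C * ∫ s in t₀..t, (∫ r in t₀..s, (r - t₀) ^ (-(1 / q)) * F r))
    (β K : ℝ) (hβ : 0 ≤ β) (hK : 0 ≤ K)
    (hP : ∀ r ∈ Set.Icc t₀ T, F r ≤ K * (r - t₀) ^ β) :
    ∀ t ∈ Set.Icc t₀ T,
      F t ≤ C * K / ((β + -(1/q) + 1) * (β + -(1/q) + 2)) * (t - t₀) ^ (β + -(1/q) + 2) := by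
  set p : ℝ := -(1/q) with hpdef
  have hq0 : 0 < q := lt_trans one_pos hq
  have hq1 : 1/q < 1 := by rw [div_lt_one hq0]; exact hq
  have hq1' : 0 < 1/q := by positivity
  have hp_neg : p < 0 := by rw [hpdef]; linarith
  have hp : -1 < p := by rw [hpdef]; linarith
  have hγ : -1 < β + p := by linarith
  have hγ1 : 0 < β + p + 1 := by linarith
  have hγ2 : 0 < β + p + 2 := by linarith
  set g : ℝ → ℝ := fun r => (r - t₀) ^ p * F r with hgdef
  set gb : ℝ → ℝ := fun r => K * (r - t₀) ^ (β + p) with hgbdef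
  -- pointwise bounds on the integrand
  have hA : ∀ r ∈ Set.Icc t₀ T, g r ≤ gb r := by
    intro r hr
    rcases eq_or_lt_of_le hr.1 with h | h
    · simp only [hgdef, hgbdef, ← h, sub_self]
      rw [Real.zero_rpow (by linarith : p ≠ 0)]
      rw [zero_mul]
      positivity
    · have hr0 : 0 < r - t₀ := by linarith
      have hFr : F r ≤ K * (r - t₀) ^ β := hP r hr
      show (r - t₀) ^ p * F r ≤ K * (r - t₀) ^ (β + p)
      calc (r - t₀) ^ p * F r ≤ (r - t₀) ^ p * (K * (r - t₀) ^ β) :=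
            mul_le_mul_of_nonneg_left hFr (Real.rpow_nonneg hr0.le p)
        _ = K * (r - t₀) ^ (β + p) := by rw [Real.rpow_add hr0]; ring
  have hA0 : ∀ r ∈ Set.Icc t₀ T, 0 ≤ g r := fun r hr =>
    mul_nonneg (Real.rpow_nonneg (by linarith [hr.1]) p) (hnonneg r hr)
  -- integrability of shifted power functions
  have hpow_int : ∀ (e a b : ℝ), -1 < e →
      IntervalIntegrable (fun r : ℝ => (r - t₀) ^ e) volume a b := by
    intro e a b he
    have h1 : IntervalIntegrable (fun x : ℝ => x ^ e) volume (a - t₀) (b - t₀) :=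
      intervalIntegral.intervalIntegrable_rpow' he
    have h2 := h1.comp_sub_right t₀
    simpa using h2
  have hgb_int : ∀ a b : ℝ, IntervalIntegrable gb volume a b := fun a b =>
    (hpow_int (β + p) a b hγ).const_mul K
  -- value of the basic integral
  have hpow_eval : ∀ (e s : ℝ), -1 < e → t₀ ≤ s →
      (∫ r in t₀..s, (r - t₀) ^ e) = (s - t₀) ^ (e + 1) / (e + 1) := by
    intro e s he hs
    rw [intervalIntegral.integral_comp_sub_right (fun x => x ^ e) t₀]
    rw [integral_rpow (Or.inl he)]
    rw [sub_self, Real.zero_rpow (by linarith : e + 1 ≠ 0)]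
    ring
  -- integrability of g on subintervals
  have hg_int : ∀ s ∈ Set.Icc t₀ T, IntervalIntegrable g volume t₀ s := by
    intro s hs
    rw [intervalIntegrable_iff_integrableOn_Ioc_of_le hs.1]
    have hsub : Set.Ioc t₀ s ⊆ Set.Icc t₀ T := fun x hx => ⟨hx.1.le, le_trans hx.2 hs.2⟩
    have hcont : ContinuousOn (fun r : ℝ => (r - t₀) ^ p) (Set.Ioc t₀ s) := by
      apply ContinuousOn.rpow_const (by fun_prop)
      intro x hx
      exact Or.inl (sub_ne_zero.mpr (ne_of_gt hx.1))
    have hmeas1 : AEMeasurable (fun r : ℝ => (r - t₀) ^ p)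
        (volume.restrict (Set.Ioc t₀ s)) :=
      hcont.aemeasurable measurableSet_Ioc
    have hmeasF : AEMeasurable F (volume.restrict (Set.Ioc t₀ s)) :=
      hmeas.mono_measure (Measure.restrict_mono hsub le_rfl)
    have hgm : AEStronglyMeasurable g (volume.restrict (Set.Ioc t₀ s)) :=
      (hmeas1.mul hmeasF).aestronglyMeasurable
    have hgb_on : IntegrableOn gb (Set.Ioc t₀ s) volume := by
      have := hgb_int t₀ s
      rwa [intervalIntegrable_iff_integrableOn_Ioc_of_le hs.1] at this
    refine Integrable.mono' hgb_on hgm ?_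
    filter_upwards [ae_restrict_mem measurableSet_Ioc] with r hr
    have hr' : r ∈ Set.Icc t₀ T := hsub hr
    rw [Real.norm_of_nonneg (hA0 r hr')]
    exact hA r hr'
  -- inner bound
  have hD : ∀ s ∈ Set.Icc t₀ T,
      (∫ r in t₀..s, g r) ≤ K / (β + p + 1) * (s - t₀) ^ (β + p + 1) := by
    intro s hs
    have h1 : (∫ r in t₀..s, g r) ≤ ∫ r in t₀..s, gb r := by
      apply intervalIntegral.integral_mono_on hs.1 (hg_int s hs) (hgb_int t₀ s)
      intro x hx
      exact hA x ⟨hx.1, le_trans hx.2 hs.2⟩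
    have h2 : (∫ r in t₀..s, gb r) = K / (β + p + 1) * (s - t₀) ^ (β + p + 1) := by
      rw [hgbdef]
      simp only [intervalIntegral.integral_const_mul]
      rw [hpow_eval (β + p) s hγ hs.1]
      ring
    linarith
  -- continuity of the inner primitive
  have hg_Icc : IntegrableOn g (Set.Icc t₀ T) volume := by
    rw [integrableOn_Icc_iff_integrableOn_Ioc]
    have := hg_int T ⟨le_refl t₀ |>.trans ht.le, le_rfl⟩
    rwa [intervalIntegrable_iff_integrableOn_Ioc_of_le ht.le] at this
  intro t htmem
  obtain ⟨ht0, htT⟩ := htmem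
  have hIcont : ContinuousOn (fun s => ∫ r in t₀..s, g r) (Set.Icc t₀ T) := by
    have h := intervalIntegral.continuousOn_primitive_interval
      (μ := volume) (f := g) (a := t₀) (b := T) (by rwa [Set.uIcc_of_le ht.le])
    rwa [Set.uIcc_of_le ht.le] at h
  have hI_int : IntervalIntegrable (fun s => ∫ r in t₀..s, g r) volume t₀ t := by
    apply ContinuousOn.intervalIntegrable
    apply hIcont.mono
    rw [Set.uIcc_of_le ht0]
    exact fun x hx => ⟨hx.1, le_trans hx.2 htT⟩
  have houter : (∫ s in t₀..t, (∫ r in t₀..s, g r)) ≤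
      K / ((β + p + 1) * (β + p + 2)) * (t - t₀) ^ (β + p + 2) := by
    have h1 : (∫ s in t₀..t, (∫ r in t₀..s, g r)) ≤
        ∫ s in t₀..t, K / (β + p + 1) * (s - t₀) ^ (β + p + 1) := by
      apply intervalIntegral.integral_mono_on ht0 hI_int
        ((hpow_int (β + p + 1) t₀ t (by linarith)).const_mul _)
      intro s hs
      exact hD s ⟨hs.1, le_trans hs.2 htT⟩
    have h2 : (∫ s in t₀..t, K / (β + p + 1) * (s - t₀) ^ (β + p + 1)) =
        K / ((β + p + 1) * (β + p + 2)) * (t - t₀) ^ (β + p + 2) := by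
      simp only [intervalIntegral.integral_const_mul]
      rw [hpow_eval (β + p + 1) t (by linarith) ht0]
      field_simp
      ring
    linarith
  have := hiter t ⟨ht0, htT⟩
  calc F t ≤ C * ∫ s in t₀..t, (∫ r in t₀..s, (r - t₀) ^ (-(1/q)) * F r) := this
    _ ≤ C * (K / ((β + p + 1) * (β + p + 2)) * (t - t₀) ^ (β + p + 2)) := by
        apply mul_le_mul_of_nonneg_left _ hC.le
        exact houter
    _ = C * K / ((β + p + 1) * (β + p + 2)) * (t - t₀) ^ (β + p + 2) := by ring
    _ = C * K / ((β + -(1/q) + 1) * (β + -(1/q) + 2)) * (t - t₀) ^ (β + -(1/q) + 2) := by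
        rw [hpdef]

end Aux

/-- Grönwall-type iteration lemma: a bounded nonnegative measurable
function `F` on `[t₀,T]` satisfying
`F(t) ≤ C ∫_{t₀}^t ∫_{t₀}^s (r - t₀)^{-1/q} F(r) dr ds` vanishes identically. -/
theorem stmt14 (t₀ T q C : ℝ) (ht : t₀ < T) (hq : 1 < q) (hC : 0 < C)
    (F : ℝ → ℝ)
    (hmeas : AEMeasurable F (volume.restrict (Set.Icc t₀ T)))
    (hbdd : ∃ M : ℝ, ∀ t ∈ Set.Icc t₀ T, F t ≤ M)
    (hnonneg : ∀ t ∈ Set.Icc t₀ T, 0 ≤ F t)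
    (hiter : ∀ t ∈ Set.Icc t₀ T,
      F t ≤ C * ∫ s in t₀..t, (∫ r in t₀..s, (r - t₀) ^ (-(1 / q)) * F r)) :
    ∀ t ∈ Set.Icc t₀ T, F t = 0 := by
  obtain ⟨M, hM⟩ := hbdd
  set p : ℝ := -(1/q) with hpdef
  have hq0 : 0 < q := lt_trans one_pos hq
  have hq1 : 1/q < 1 := by rw [div_lt_one hq0]; exact hq
  have hq1' : 0 < 1/q := by positivity
  have hp : -1 < p := by rw [hpdef]; linarith
  have hp2 : 1 < p + 2 := by linarith
  have hT0 : 0 < T - t₀ := by linarith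
  -- abbreviation for power bounds
  set P : ℝ → ℝ → Prop := fun β K => ∀ t ∈ Set.Icc t₀ T, F t ≤ K * (t - t₀) ^ β with hPdef
  have hstep : ∀ β K : ℝ, 0 ≤ β → 0 ≤ K → P β K →
      P (β + p + 2) (C * K / ((β + p + 1) * (β + p + 2))) := by
    intro β K hβ hK h
    intro t htmem
    have := stmt14_step t₀ T q C F ht hq hC hmeas hnonneg hiter β K hβ hK h t htmem
    calc F t ≤ C * K / ((β + -(1/q) + 1) * (β + -(1/q) + 2)) * (t - t₀) ^ (β + -(1/q) + 2) := this
      _ = C * K / ((β + p + 1) * (β + p + 2)) * (t - t₀) ^ (β + p + 2) := by rw [hpdef]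
  -- Phase 1 : bounds with arbitrarily high power
  have hphase1 : ∀ n : ℕ, ∃ K : ℝ, 0 ≤ K ∧ P ((n : ℝ) * (p + 2)) K := by
    intro n
    induction n with
    | zero =>
      refine ⟨max M 0, le_max_right _ _, ?_⟩
      intro t htmem
      have : F t ≤ max M 0 := le_trans (hM t htmem) (le_max_left _ _)
      simpa [Real.rpow_zero] using this
    | succ n ih =>
      obtain ⟨K, hK0, hPK⟩ := ih
      have hβ : (0:ℝ) ≤ (n : ℝ) * (p + 2) := by positivity
      have hden : 0 < ((n : ℝ) * (p + 2) + p + 1) * ((n : ℝ) * (p + 2) + p + 2) := by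
        have h1 : (0:ℝ) ≤ (n : ℝ) * (p + 2) := hβ
        nlinarith
      refine ⟨C * K / (((n : ℝ) * (p + 2) + p + 1) * ((n : ℝ) * (p + 2) + p + 2)), by positivity, ?_⟩
      have h := hstep ((n : ℝ) * (p + 2)) K hβ hK0 hPK
      have hcast : ((n : ℕ) + 1 : ℕ) = (n : ℕ) + 1 := rfl
      intro t htmem
      have := h t htmem
      have hexp : ((n + 1 : ℕ) : ℝ) * (p + 2) = (n : ℝ) * (p + 2) + p + 2 := by push_cast; ring
      rw [hexp]
      exact this
  -- Phase 2 : contraction at a fixed high power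
  set D : ℝ := C * (T - t₀) ^ (p + 2) with hDdef
  have hD0 : 0 < D := by
    have := Real.rpow_pos_of_pos hT0 (p + 2)
    positivity
  obtain ⟨n, hn⟩ := exists_nat_ge D
  set β : ℝ := (n : ℝ) * (p + 2) with hβdef
  have hβD : D ≤ β := le_trans hn (by nlinarith [Nat.cast_nonneg (α := ℝ) n])
  have hβ0 : 0 ≤ β := le_trans hD0.le hβD
  set c : ℝ := D / ((β + p + 1) * (β + p + 2)) with hcdef
  have hden : 0 < (β + p + 1) * (β + p + 2) := by nlinarith
  have hc0 : 0 ≤ c := by positivity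
  have hc1 : c < 1 := by
    rw [hcdef, div_lt_one hden]
    nlinarith
  -- contraction step
  have hcontr : ∀ K : ℝ, 0 ≤ K → P β K → P β (c * K) := by
    intro K hK h
    have h1 := hstep β K hβ0 hK h
    intro t htmem
    have h2 := h1 t htmem
    have ht0 : 0 ≤ t - t₀ := by linarith [htmem.1]
    have hsplit : (t - t₀) ^ (β + p + 2) = (t - t₀) ^ β * (t - t₀) ^ (p + 2) := by
      rw [← Real.rpow_add' ht0 (by nlinarith)]
      ring_nf
    have hTb : (t - t₀) ^ (p + 2) ≤ (T - t₀) ^ (p + 2) :=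
      Real.rpow_le_rpow ht0 (by linarith [htmem.2]) (by linarith)
    calc F t ≤ C * K / ((β + p + 1) * (β + p + 2)) * (t - t₀) ^ (β + p + 2) := h2
      _ = C * K / ((β + p + 1) * (β + p + 2)) * ((t - t₀) ^ β * (t - t₀) ^ (p + 2)) := by
          rw [hsplit]
      _ ≤ C * K / ((β + p + 1) * (β + p + 2)) * ((t - t₀) ^ β * (T - t₀) ^ (p + 2)) := by
          apply mul_le_mul_of_nonneg_left _ (by positivity)
          exact mul_le_mul_of_nonneg_left hTb (Real.rpow_nonneg ht0 β)
      _ = c * K * (t - t₀) ^ β := by rw [hcdef, hDdef]; field_simp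
  obtain ⟨K₀, hK₀0, hPK₀⟩ := hphase1 n
  have hiterate : ∀ m : ℕ, P β (c ^ m * K₀) := by
    intro m
    induction m with
    | zero => simpa using hPK₀
    | succ m ih =>
      have := hcontr (c ^ m * K₀) (by positivity) ih
      intro t htmem
      have h := this t htmem
      calc F t ≤ c * (c ^ m * K₀) * (t - t₀) ^ β := h
        _ = c ^ (m + 1) * K₀ * (t - t₀) ^ β := by ring
  intro t htmem
  refine le_antisymm ?_ (hnonneg t htmem)
  have ht0 : 0 ≤ t - t₀ := by linarith [htmem.1]
  have hbound : ∀ m : ℕ, F t ≤ c ^ m * (K₀ * (T - t₀) ^ β) := by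
    intro m
    have h := hiterate m t htmem
    have : (t - t₀) ^ β ≤ (T - t₀) ^ β :=
      Real.rpow_le_rpow ht0 (by linarith [htmem.2]) hβ0
    calc F t ≤ c ^ m * K₀ * (t - t₀) ^ β := h
      _ ≤ c ^ m * K₀ * (T - t₀) ^ β := mul_le_mul_of_nonneg_left this (by positivity)
      _ = c ^ m * (K₀ * (T - t₀) ^ β) := by ring
  have htend : Filter.Tendsto (fun m : ℕ => c ^ m * (K₀ * (T - t₀) ^ β))
      Filter.atTop (nhds 0) := by
    have := (tendsto_pow_atTop_nhds_zero_of_lt_one hc0 hc1).mul_const (K₀ * (T - t₀) ^ β)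
    simpa using this
  exact ge_of_tendsto htend (Filter.Eventually.of_forall hbound)
end
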